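/- arXiv:1401.0326 — 2 statements merged into one kernel-verified Lean document; each statement's English description precedes it below -/
import Mathlib

section
/- Let α > 3/4 and let C₀ = C₀(α) be the constant from the randomized collision estimate (so that ‖[B_{j,k+1}]^ω γ‖_{L²(Ω;H^α)} ≤ C₀‖γ‖_{H^α} for deterministic γ). Fix k ∈ ℕ and j ∈ {1,…,k}. If γ^{(k+1)} is a density matrix of order k+1 depending measurably on ω* ∈ Ω* but independent of the coordinate ω_{k+1} (i.e. p*-a.e. equal to a function of (ω_ℓ)_{ℓ≠k+1} only), then ‖[B_{j,k+1}]^{ω_{k+1}} γ^{(k+1)}‖_{L²(Ω*; H^α(Λ^k×Λ^k))} ≤ C₀ ‖γ^{(k+1)}‖_{L²(Ω*; H^α(Λ^{k+1}×Λ^{k+1}))}, and hence ‖[B^{(k+1)}]^{ω_{k+1}} γ^{(k+1)}‖_{L²(Ω*; H^α(Λ^k×Λ^k))} ≤ C₀ · k · ‖γ^{(k+1)}‖_{L²(Ω*; H^α(Λ^{k+1}×Λ^{k+1}))}. Moreover, if Σ^{ω*} = (σ^{(k)})_k is a sequence of density matrices depending on ω* such that for every k ≥ 1 the component σ^{(k+1)}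 is independent of ω_{k+1}, then for all 0 < ξ₀ < ξ there is a constant depending only on ξ, ξ₀, α with ‖[B̂]^{ω*} Σ^{ω*}‖_{L²(Ω*)ℋ_{ξ₀}^α} ≲_{ξ,ξ₀,α} ‖Σ^{ω*}‖_{L²(Ω*)ℋ_ξ^α}. -/
open MeasureTheory ENNReal

noncomputable section

namespace GP

/-- Frequencies in ℤ³. -/
abbrev Z3 : Type := Fin 3 → ℤ

/-- The squared magnitude |ζ|² of a frequency. -/
def nsq (ζ : Z3) : ℤ := ∑ i, (ζ i) ^ 2

/-- The Japanese bracket ⟨ζ⟩ = √(1 + |ζ|²). -/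
def jb (ζ : Z3) : ℝ := Real.sqrt (1 + (nsq ζ : ℝ))

/-- A density matrix of order `k` on 𝕋³, represented by its Fourier coefficients. -/
abbrev DM (k : ℕ) : Type := (Fin k → Z3) → (Fin k → Z3) → ℂ

/-- The Sobolev weight ∏_j ⟨ξ_j⟩^{2α} ⟨ξ'_j⟩^{2α}. -/
def wt (α : ℝ) {k : ℕ} (a b : Fin k → Z3) : ℝ :=
  ∏ j, (jb (a j) ^ (2 * α) * jb (b j) ^ (2 * α))

/-- The squared H^α norm of a density matrix (with values in ℝ≥0∞). -/
def hsq (α : ℝ) {k : ℕ} (γ : DM k) : ℝ≥0∞ :=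
  ∑' q : (Fin k → Z3) × (Fin k → Z3),
    ENNReal.ofReal (wt α q.1 q.2) * (‖γ q.1 q.2‖₊ : ℝ≥0∞) ^ 2

/-- The H^α norm of a density matrix. -/
def hnorm (α : ℝ) {k : ℕ} (γ : DM k) : ℝ≥0∞ := hsq α γ ^ (1 / 2 : ℝ)

/-- The free evolution U^{(k)}(t), as a Fourier multiplier. -/
def freeEv (t : ℝ) {k : ℕ} (γ : DM k) : DM k := fun a b =>
  Complex.exp (-(Complex.I * (t : ℂ) *
      ((((∑ j, nsq (a j)) - (∑ j, nsq (b j)) : ℤ)) : ℂ))) * γ a b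

variable {Ω W : Type}

/-- The randomized collision operator [B⁺_{j,k+1}]^ω on the Fourier side. -/
def Bp (h : Z3 → Ω → ℝ) (ω : Ω) {k : ℕ} (j : Fin k) (γ : DM (k + 1)) : DM k :=
  fun a b => ∑' η : Z3, ∑' η' : Z3,
    ((h (a j) ω * h (a j - η + η') ω * h η ω * h η' ω : ℝ) : ℂ) *
      γ (Fin.snoc (Function.update a j (a j - η + η')) η) (Fin.snoc b η')

/-- The randomized collision operator [B⁻_{j,k+1}]^ω on the Fourier side. -/
def Bm (h : Z3 → Ω → ℝ) (ω : Ω) {k : ℕ} (j : Fin k) (γ : DM (k + 1)) : DM k :=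
  fun a b => ∑' η : Z3, ∑' η' : Z3,
    ((h (b j) ω * h (b j - η' + η) ω * h η ω * h η' ω : ℝ) : ℂ) *
      γ (Fin.snoc a η) (Fin.snoc (Function.update b j (b j - η' + η)) η')

/-- [B_{j,k+1}]^ω = [B⁺_{j,k+1}]^ω − [B⁻_{j,k+1}]^ω. -/
def Bc (h : Z3 → Ω → ℝ) (ω : Ω) {k : ℕ} (j : Fin k) (γ : DM (k + 1)) : DM k :=
  Bp h ω j γ - Bm h ω j γ

/-- The full randomized collision operator [B^{(k+1)}]^ω = Σ_{j=1}^k [B_{j,k+1}]^ω. -/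
def Bfull (h : Z3 → Ω → ℝ) (ω : Ω) {k : ℕ} (γ : DM (k + 1)) : DM k :=
  ∑ j : Fin k, Bc h ω j γ

/-- `(h ζ)` is a family of independent random variables each taking the values
`1` and `-1` with probability `1/2`. -/
def BernoulliFamily [MeasurableSpace Ω] (p : Measure Ω) (h : Z3 → Ω → ℝ) : Prop :=
  (∀ ζ : Z3, Measurable (h ζ)) ∧
    ProbabilityTheory.iIndepFun h p ∧
    ∀ ζ : Z3, p {ω | h ζ ω = 1} = 1 / 2 ∧ p {ω | h ζ ω = -1} = 1 / 2

/-- `μ` is an infinite product of copies of `p`: the coordinates are independent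
and each has law `p` (Kakutani/Kolmogorov product measure). -/
def ProductLaw [MeasurableSpace Ω] (p : Measure Ω) (μ : Measure (ℕ → Ω)) : Prop :=
  IsProbabilityMeasure μ ∧
    (∀ n : ℕ, μ.map (fun w => w n) = p) ∧
    ProbabilityTheory.iIndepFun
      (fun (n : ℕ) (w : ℕ → Ω) => w n) μ

/-- The L²(μ; H^α) norm of a random density matrix. -/
def l2H [MeasurableSpace W] (μ : Measure W) (α : ℝ) {k : ℕ} (γ : W → DM k) : ℝ≥0∞ :=
  (∫⁻ w, hsq α (γ w) ∂μ) ^ (1 / 2 : ℝ)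

/-- A sequence of density matrices; the component of order `k` is `Γ k`. -/
abbrev Seq : Type := ∀ k : ℕ, DM k

/-- The ℋ_ξ^α norm: Σ_{k ≥ 1} ξ^k ‖γ^{(k)}‖_{H^α}. -/
def hseq (α ξ : ℝ) (Γ : Seq) : ℝ≥0∞ :=
  ∑' k : ℕ, ENNReal.ofReal (ξ ^ (k + 1)) * hnorm α (Γ (k + 1))

/-- The L²(μ)ℋ_ξ^α norm: Σ_{k ≥ 1} ξ^k ‖γ^{(k)}‖_{L²(μ; H^α)}. -/
def l2seq [MeasurableSpace W] (μ : Measure W) (α ξ : ℝ) (Γ : W → Seq) : ℝ≥0∞ :=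
  ∑' k : ℕ, ENNReal.ofReal (ξ ^ (k + 1)) * l2H μ α (fun w => Γ w (k + 1))

/-- The L^∞_{t∈[0,T]} L²(μ) ℋ_ξ^α norm (essential supremum in time). -/
def tl2seq [MeasurableSpace W] (μ : Measure W) (α ξ T : ℝ) (Γ : ℝ → W → Seq) : ℝ≥0∞ :=
  essSup (fun t => l2seq μ α ξ (Γ t)) (volume.restrict (Set.Icc (0 : ℝ) T))

/-- The free evolution acting on sequences: (U(t)Γ)^{(k)} = U^{(k)}(t) γ^{(k)}. -/
def UAll (t : ℝ) (Γ : Seq) : Seq := fun k => freeEv t (Γ k)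

/-- The independently randomized operator [B̂]^{ω*}: the component of order k is
[B^{(k+1)}]^{ω_{k+1}} γ^{(k+1)}. -/
def BhatI (h : Z3 → Ω → ℝ) (w : ℕ → Ω) (Γ : Seq) : Seq :=
  fun k => Bfull h (w (k + 1)) (Γ (k + 1))

/-- The dependently randomized operator [B̂]^ω (the same ω at every level). -/
def BhatD (h : Z3 → Ω → ℝ) (ω : Ω) (Γ : Seq) : Seq := fun k => Bfull h ω (Γ (k + 1))

/-- Componentwise time integral ∫_0^t Y(s) ds of a one-parameter family of sequences. -/
def intComp (Y : ℝ → Seq) (t : ℝ) : Seq := fun k a b => ∫ s in (0 : ℝ)..t, Y s k a b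

/-- The collision-operator family of the independently randomized hierarchy. -/
def BopI (h : Z3 → Ω → ℝ) (w : ℕ → Ω) : ∀ k : ℕ, DM (k + 1) → DM k :=
  fun k γ => Bfull h (w (k + 1)) γ

/-- The collision-operator family of the dependently randomized hierarchy. -/
def BopD (h : Z3 → Ω → ℝ) (ω : Ω) : ∀ k : ℕ, DM (k + 1) → DM k :=
  fun _ γ => Bfull h ω γ

/-- The iterated Duhamel term `Duh_j(Γ0)^{(k)}(t)`:
`Duh_0^{(k)}(t) = U^{(k)}(t) γ₀^{(k)}` and
`Duh_{j+1}^{(k)}(t) = (−i) ∫_0^t U^{(k)}(t−s) B^{(k+1)} (Duh_j^{(k+1)}(s)) ds`. -/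
def Duh (Bop : ∀ k : ℕ, DM (k + 1) → DM k) (Γ0 : Seq) : ℕ → ∀ k : ℕ, ℝ → DM k
  | 0 => fun k t => freeEv t (Γ0 k)
  | j + 1 => fun k t a b =>
      (-Complex.I) *
        ∫ s in (0 : ℝ)..t, (freeEv (t - s) (Bop k (Duh Bop Γ0 j (k + 1) s))) a b

/-- The explicit solution of the truncated hierarchy:
`γ_N^{(k)}(t) = Σ_{j=0}^{N−k} Duh_j(Γ0)^{(k)}(t)` for k ≤ N, and 0 for k > N. -/
def trunc (Bop : ∀ k : ℕ, DM (k + 1) → DM k) (Γ0 : Seq) (N : ℕ) (t : ℝ) : Seq :=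
  fun k => if k ≤ N then ∑ j ∈ Finset.range (N + 1 - k), Duh Bop Γ0 j k t else 0

/-- The projection P_{>N}. -/
def tailP (Γ : Seq) (N : ℕ) : Seq := fun k => if N < k then Γ k else 0

/-- `f` agrees μ-a.e. with a function not depending on the n-th coordinate. -/
def IndepOf [MeasurableSpace Ω] (μ : Measure (ℕ → Ω)) (n : ℕ) {β : Type}
    (f : (ℕ → Ω) → β) : Prop :=
  ∃ g : (ℕ → Ω) → β, (∀ᵐ w ∂μ, f w = g w) ∧
    ∀ w w' : ℕ → Ω, (∀ m : ℕ, m ≠ n → w m = w' m) → g w = g w'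

/-- The non-resonant class 𝒩 with respect to the regularity exponent α:
the Fourier coefficients vanish unless |ξ₁| > ⋯ > |ξ_m| > |ξ'₁| > ⋯ > |ξ'_m|,
and ‖σ^{(m)}‖_{H^α} ≤ C^m. -/
def NonRes (α : ℝ) (Γ : Seq) : Prop :=
  (∀ (m : ℕ) (a b : Fin m → Z3), Γ m a b ≠ 0 →
      (∀ i i' : Fin m, i < i' → nsq (a i') < nsq (a i)) ∧
      (∀ i i' : Fin m, i < i' → nsq (b i') < nsq (b i)) ∧
      ∀ i i' : Fin m, nsq (b i') < nsq (a i)) ∧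
  ∃ C : ℝ, 0 < C ∧ ∀ m : ℕ, 1 ≤ m → hnorm α (Γ m) ≤ ENNReal.ofReal (C ^ m)

/-- The generalized collision operator [B⁺_{ℓ,n}]^ω acting on density matrices of
order m+1 by contracting the n-th variable pair onto the ℓ-th unprimed variable
(0-based indices; variable labels are preserved). -/
def gBp (h : Z3 → Ω → ℝ) (ω : Ω) {m : ℕ} (ℓ n : ℕ) (γ : DM (m + 1)) : DM m :=
  if hn : n < m + 1 then
    if hl : ℓ < m then
      fun a b => ∑' η : Z3, ∑' η' : Z3,
        ((h (a ⟨ℓ, hl⟩) ω * h (a ⟨ℓ, hl⟩ - η + η') ω * h η ω * h η' ω : ℝ) : ℂ) *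
          γ (Fin.insertNth ⟨n, hn⟩ η (Function.update a ⟨ℓ, hl⟩ (a ⟨ℓ, hl⟩ - η + η')))
            (Fin.insertNth ⟨n, hn⟩ η' b)
    else 0
  else 0

/-- The generalized collision operator [B⁻_{ℓ,n}]^ω, acting on the primed variables. -/
def gBm (h : Z3 → Ω → ℝ) (ω : Ω) {m : ℕ} (ℓ n : ℕ) (γ : DM (m + 1)) : DM m :=
  if hn : n < m + 1 then
    if hl : ℓ < m then
      fun a b => ∑' η : Z3, ∑' η' : Z3,
        ((h (b ⟨ℓ, hl⟩) ω * h (b ⟨ℓ, hl⟩ - η' + η) ω * h η ω * h η' ω : ℝ) : ℂ) *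
          γ (Fin.insertNth ⟨n, hn⟩ η a)
            (Fin.insertNth ⟨n, hn⟩ η' (Function.update b ⟨ℓ, hl⟩ (b ⟨ℓ, hl⟩ - η' + η)))
    else 0
  else 0

/-- Signed generalized collision operator [B^±_{ℓ,n}]^ω; `true` is the + sign. -/
def gB (h : Z3 → Ω → ℝ) (ω : Ω) {m : ℕ} (s : Bool) (ℓ n : ℕ) (γ : DM (m + 1)) : DM m :=
  if s then gBp h ω ℓ n γ else gBm h ω ℓ n γ

/-- The composition
`U^{(k)}(t₁−t₂)[B^±_{ℓ₁,n₁}]^ω U^{(k+1)}(t₂−t₃)[B^±_{ℓ₂,n₂}]^ω ⋯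
 U^{(k+j−1)}(t_j−t_{j+1})[B^±_{ℓ_j,n_j}]^ω σ^{(k+j)}`,
where `ts i` plays the role of `t_{i+1}`, `ℓs i`, `ns i` those of `ℓ_{i+1}`, `n_{i+1}`
(0-based), and `ss i` is the sign of the (i+1)-st collision operator. -/
def comp (h : Z3 → Ω → ℝ) (ω : Ω) (ℓs ns : ℕ → ℕ) (ss : ℕ → Bool) (ts : ℕ → ℝ) :
    (j : ℕ) → (k : ℕ) → DM (k + j) → DM k
  | 0, _, σ => σ
  | j + 1, k, σ =>
      comp h ω ℓs ns ss ts j k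
        (freeEv (ts j - ts (j + 1)) (gB h ω (ss j) (ℓs j) (ns j) σ))

/-- The iterated Duhamel expression of the dependently randomized hierarchy:
`EExp_j^{(k)}(t) = ∫_0^t⋯∫_0^{t_{j−1}} [B^{(k+1)}]^ω U^{(k+1)}(t−t₁) [B^{(k+2)}]^ω ⋯
[B^{(k+j+1)}]^ω U^{(k+j+1)}(t_j) σ^{(k+j+1)} dt_j ⋯ dt₁`. -/
def EExp (h : Z3 → Ω → ℝ) (ω : Ω) (Γ : Seq) : ℕ → ∀ k : ℕ, ℝ → DM k
  | 0 => fun k t => Bfull h ω (freeEv t (Γ (k + 1)))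
  | j + 1 => fun k t a b =>
      ∫ s in (0 : ℝ)..t, (Bfull h ω (freeEv (t - s) (EExp h ω Γ j (k + 1) s))) a b

/- Since `γ` does not see the coordinate `ω_{k+1}`, resampling that coordinate by an independent
`ω ~ p` leaves the law `p*` unchanged, so by Tonelli the `L²(Ω*; H^α)` norm of
`[B_{j,k+1}]^{ω_{k+1}} γ` is at most the `L²(Ω*)` average of the deterministic estimate applied to
`γ(ω*)`. Summing over `j` by Cauchy–Schwarz costs the factor `k`, and the `ℋ` bound follows from
`k ξ₀^k ≤ ξ₀ ξ^{k+1} / (ξ - ξ₀)²`. -/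

lemma rpow_half_le_mul_rpow_half_iff {x y c : ℝ≥0∞} :
    x ^ (1 / 2 : ℝ) ≤ c * y ^ (1 / 2 : ℝ) ↔ x ≤ c ^ 2 * y := by
  have hsqrt : c * y ^ (1 / 2 : ℝ) = (c ^ 2 * y) ^ (1 / 2 : ℝ) := by
    rw [ENNReal.mul_rpow_of_nonneg _ _ (by norm_num), ← ENNReal.rpow_natCast, ← ENNReal.rpow_mul]
    norm_num
  rw [hsqrt, ENNReal.rpow_le_rpow_iff (by norm_num)]

section Norms

variable [MeasurableSpace W] {W' : Type} [MeasurableSpace W'] (α : ℝ) {k k' : ℕ}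

lemma l2H_le_mul_l2H_iff (ν : Measure W) (ν' : Measure W') (G : W → DM k) (γ : W' → DM k')
    (c : ℝ≥0∞) :
    l2H ν α G ≤ c * l2H ν' α γ ↔ ∫⁻ w, hsq α (G w) ∂ν ≤ c ^ 2 * ∫⁻ w, hsq α (γ w) ∂ν' :=
  rpow_half_le_mul_rpow_half_iff

lemma l2H_le_mul_hnorm_iff (ν : Measure W) (G : W → DM k) (γ : DM k') (c : ℝ≥0∞) :
    l2H ν α G ≤ c * hnorm α γ ↔ ∫⁻ w, hsq α (G w) ∂ν ≤ c ^ 2 * hsq α γ :=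
  rpow_half_le_mul_rpow_half_iff

lemma nnnorm_sum_sq_le {ι : Type} (s : Finset ι) (z : ι → ℂ) :
    (‖∑ i ∈ s, z i‖₊ : ℝ≥0∞) ^ 2 ≤ s.card * ∑ i ∈ s, (‖z i‖₊ : ℝ≥0∞) ^ 2 := by
  have : ‖∑ i ∈ s, z i‖₊ ^ 2 ≤ s.card * ∑ i ∈ s, ‖z i‖₊ ^ 2 :=
    (pow_le_pow_left₀ zero_le (nnnorm_sum_le s z) 2).trans sq_sum_le_card_mul_sum_sq
  exact_mod_cast this

lemma hsq_sum_le {ι : Type} (s : Finset ι) (γ : ι → DM k) :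
    hsq α (∑ i ∈ s, γ i) ≤ s.card * ∑ i ∈ s, hsq α (γ i) := by
  simp only [hsq, Finset.sum_apply]
  calc ∑' q : (Fin k → Z3) × (Fin k → Z3),
        ENNReal.ofReal (wt α q.1 q.2) * (‖∑ i ∈ s, γ i q.1 q.2‖₊ : ℝ≥0∞) ^ 2
      ≤ ∑' q : (Fin k → Z3) × (Fin k → Z3),
        ENNReal.ofReal (wt α q.1 q.2) * (s.card * ∑ i ∈ s, (‖γ i q.1 q.2‖₊ : ℝ≥0∞) ^ 2) :=
        ENNReal.tsum_le_tsum fun q => by gcongr; exact nnnorm_sum_sq_le s _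
    _ = s.card * ∑ i ∈ s, ∑' q : (Fin k → Z3) × (Fin k → Z3),
        ENNReal.ofReal (wt α q.1 q.2) * (‖γ i q.1 q.2‖₊ : ℝ≥0∞) ^ 2 := by
        rw [← Summable.tsum_finsetSum fun i _ => ENNReal.summable, ← ENNReal.tsum_mul_left]
        simp only [Finset.mul_sum, mul_left_comm]

lemma measurable_hsq {G : W → DM k} (hG : ∀ a b, Measurable fun w => G w a b) :
    Measurable fun w => hsq α (G w) :=
  Measurable.tsum fun q => ((hG q.1 q.2).nnnorm.coe_nnreal_ennreal.pow_const 2).const_mul _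

lemma lintegral_hsq_sum_le {ι : Type} (ν : Measure W) (s : Finset ι) {G : ι → W → DM k}
    (hG : ∀ i a b, Measurable fun w => G i w a b) :
    ∫⁻ w, hsq α (∑ i ∈ s, G i w) ∂ν ≤ s.card * ∑ i ∈ s, ∫⁻ w, hsq α (G i w) ∂ν :=
  calc ∫⁻ w, hsq α (∑ i ∈ s, G i w) ∂ν ≤ ∫⁻ w, s.card * ∑ i ∈ s, hsq α (G i w) ∂ν :=
        lintegral_mono fun w => hsq_sum_le α s _
    _ = s.card * ∑ i ∈ s, ∫⁻ w, hsq α (G i w) ∂ν := by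
        rw [lintegral_const_mul' _ _ (ENNReal.natCast_ne_top _),
          lintegral_finsetSum _ fun i _ => measurable_hsq α (hG i)]

end Norms

section Collision

variable [MeasurableSpace Ω] {h : Z3 → Ω → ℝ} {k : ℕ}

lemma measurable_Bc_apply (hh : ∀ ζ, Measurable (h ζ)) (j : Fin k) (γ : DM (k + 1))
    (a b : Fin k → Z3) : Measurable fun ω => Bc h ω j γ a b := by
  have hcoef : ∀ ζ₁ ζ₂ ζ₃ ζ₄ : Z3,
      Measurable fun ω => ((h ζ₁ ω * h ζ₂ ω * h ζ₃ ω * h ζ₄ ω : ℝ) : ℂ) := by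
    intro ζ₁ ζ₂ ζ₃ ζ₄
    exact Complex.measurable_ofReal.comp ((((hh _).mul (hh _)).mul (hh _)).mul (hh _))
  exact (Measurable.tsum fun η => Measurable.tsum fun η' => (hcoef _ _ _ _).mul_const _).sub
    (Measurable.tsum fun η => Measurable.tsum fun η' => (hcoef _ _ _ _).mul_const _)

lemma l2H_Bfull_le (p : Measure Ω) (hh : ∀ ζ, Measurable (h ζ)) {α : ℝ} {c : ℝ≥0∞}
    (γ : DM (k + 1)) (hBc : ∀ j : Fin k, l2H p α (fun ω => Bc h ω j γ) ≤ c * hnorm α γ) :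
    l2H p α (fun ω => Bfull h ω γ) ≤ c * k * hnorm α γ := by
  simp only [l2H_le_mul_hnorm_iff] at hBc ⊢
  calc ∫⁻ ω, hsq α (Bfull h ω γ) ∂p ≤ k * ∑ j : Fin k, ∫⁻ ω, hsq α (Bc h ω j γ) ∂p := by
        have := lintegral_hsq_sum_le α p Finset.univ fun j => measurable_Bc_apply hh j γ
        rwa [Finset.card_univ, Fintype.card_fin] at this
    _ ≤ k * ∑ _j : Fin k, c ^ 2 * hsq α γ := by gcongr with j; exact hBc j
    _ = (c * k) ^ 2 * hsq α γ := by
        simp only [Finset.sum_const, Finset.card_univ, Fintype.card_fin, nsmul_eq_mul]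
        ring

end Collision

lemma preimage_update_pi (n : ℕ) (s : Finset ℕ) (t : ℕ → Set Ω) :
    (fun q : (ℕ → Ω) × Ω => Function.update q.1 n q.2) ⁻¹' (s : Set ℕ).pi t =
      (↑(s.erase n) : Set ℕ).pi t ×ˢ {ω | n ∈ s → ω ∈ t n} := by
  ext ⟨w, ω⟩
  simp only [Set.mem_preimage, Set.mem_pi, Set.mem_prod, Finset.coe_erase, Set.mem_sdiff,
    Finset.mem_coe, Set.mem_singleton_iff, Set.mem_ofPred_eq, Function.update_apply]
  grind

section ProductLaw

variable [MeasurableSpace Ω] {p : Measure Ω} {μ : Measure (ℕ → Ω)}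

lemma ProductLaw.measure_pi (hProd : ProductLaw p μ) (s : Finset ℕ) {t : ℕ → Set Ω}
    (ht : ∀ i, MeasurableSet (t i)) : μ ((s : Set ℕ).pi t) = ∏ i ∈ s, p (t i) := by
  have hpi : (s : Set ℕ).pi t = ⋂ i ∈ s, (fun w : ℕ → Ω => w i) ⁻¹' t i := by
    ext w
    simp [Set.mem_pi]
  rw [hpi, hProd.2.2.measure_inter_preimage_eq_mul s fun i _ => ht i]
  refine Finset.prod_congr rfl fun i _ => ?_
  rw [← hProd.2.1 i, Measure.map_apply (measurable_pi_apply i) (ht i)]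

lemma ProductLaw.map_update [IsProbabilityMeasure p] (hProd : ProductLaw p μ) (n : ℕ) :
    (μ.prod p).map (fun q : (ℕ → Ω) × Ω => Function.update q.1 n q.2) = μ := by
  have := hProd.1
  have hupd : Measurable fun q : (ℕ → Ω) × Ω => Function.update q.1 n q.2 := measurable_update'
  have := Measure.isProbabilityMeasure_map (μ := μ.prod p) hupd.aemeasurable
  refine ext_of_generate_finite _ generateFrom_squareCylinders.symm
    (isPiSystem_squareCylinders (fun _ => MeasurableSpace.isPiSystem_measurableSet)
      fun _ => MeasurableSet.univ) ?_ (by simp)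
  rintro _ ⟨s, t, ht, rfl⟩
  have ht : ∀ i, MeasurableSet (t i) := fun i => ht i (Set.mem_univ i)
  rw [Measure.map_apply hupd (.pi (Finset.countable_toSet s) fun i _ => ht i),
    preimage_update_pi, Measure.prod_prod, hProd.measure_pi _ ht, hProd.measure_pi _ ht]
  by_cases hn : n ∈ s
  · simp only [hn, forall_const, Set.ofPred_mem_eq]
    rw [mul_comm]
    exact Finset.mul_prod_erase s (fun i => p (t i)) hn
  · simp [hn]

lemma ProductLaw.lintegral_comp_le [IsProbabilityMeasure p] (hProd : ProductLaw p μ) {n : ℕ}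
    {β : Type} {g : (ℕ → Ω) → β} (hg : IndepOf μ n g) (f : Ω → β → ℝ≥0∞) :
    ∫⁻ w, f (w n) (g w) ∂μ ≤ ∫⁻ w, ∫⁻ ω, f ω (g w) ∂p ∂μ := by
  obtain ⟨g', hae, hg'⟩ := hg
  set upd : (ℕ → Ω) × Ω → ℕ → Ω := fun q => Function.update q.1 n q.2
  calc ∫⁻ w, f (w n) (g w) ∂μ = ∫⁻ w, f (w n) (g' w) ∂(μ.prod p).map upd := by
        rw [hProd.map_update]
        exact lintegral_congr_ae (hae.mono fun w hw => by simp only [hw])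
    _ ≤ ∫⁻ q, f (upd q n) (g' (upd q)) ∂(μ.prod p) := lintegral_map_le _ _
    _ = ∫⁻ q, f q.2 (g' q.1) ∂(μ.prod p) := by
        congr with q
        simp only [upd, Function.update_self]
        rw [hg' _ _ fun m hm => Function.update_of_ne hm _ _]
    _ ≤ ∫⁻ w, ∫⁻ ω, f ω (g' w) ∂p ∂μ := lintegral_prod_le _
    _ = ∫⁻ w, ∫⁻ ω, f ω (g w) ∂p ∂μ := lintegral_congr_ae (hae.mono fun w hw => by simp only [hw])

lemma ProductLaw.l2H_comp_le [IsProbabilityMeasure p] (hProd : ProductLaw p μ) {α : ℝ} {n k k' : ℕ}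
    {F : Ω → DM k → DM k'} {γ : (ℕ → Ω) → DM k} (hγ : IndepOf μ n γ) {c : ℝ≥0∞} (hc : c ≠ ⊤)
    (hF : ∀ γ₀, l2H p α (fun ω => F ω γ₀) ≤ c * hnorm α γ₀) :
    l2H μ α (fun w => F (w n) (γ w)) ≤ c * l2H μ α γ := by
  simp only [l2H_le_mul_hnorm_iff] at hF
  rw [l2H_le_mul_l2H_iff]
  calc ∫⁻ w, hsq α (F (w n) (γ w)) ∂μ ≤ ∫⁻ w, ∫⁻ ω, hsq α (F ω (γ w)) ∂p ∂μ :=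
        hProd.lintegral_comp_le hγ fun ω γ₀ => hsq α (F ω γ₀)
    _ ≤ ∫⁻ w, c ^ 2 * hsq α (γ w) ∂μ := lintegral_mono fun w => hF (γ w)
    _ = c ^ 2 * ∫⁻ w, hsq α (γ w) ∂μ := lintegral_const_mul' _ _ (ENNReal.pow_ne_top hc)

end ProductLaw

lemma natCast_mul_pow_le {ξ₀ ξ : ℝ} (hξ₀ : 0 < ξ₀) (hlt : ξ₀ < ξ) (m : ℕ) :
    m * ξ₀ ^ m ≤ ξ₀ / (ξ - ξ₀) ^ 2 * ξ ^ (m + 1) := by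
  have hξ : 0 < ξ := hξ₀.trans hlt
  have hr : ‖ξ₀ / ξ‖ < 1 := by
    rw [Real.norm_of_nonneg (by positivity), div_lt_one hξ]
    exact hlt
  have hgeom := le_hasSum (hasSum_coe_mul_geometric_of_norm_lt_one hr) m fun i _ => by positivity
  have hsub : ξ - ξ₀ ≠ 0 := (sub_pos.2 hlt).ne'
  calc (m : ℝ) * ξ₀ ^ m = m * (ξ₀ / ξ) ^ m * ξ ^ m := by
        rw [mul_assoc, div_pow, div_mul_cancel₀ _ (pow_ne_zero _ hξ.ne')]
    _ ≤ ξ₀ / ξ / (1 - ξ₀ / ξ) ^ 2 * ξ ^ m := by gcongr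
    _ = ξ₀ / (ξ - ξ₀) ^ 2 * ξ ^ (m + 1) := by field_simp; ring

lemma tsum_pow_mul_le_of_le_succ_mul {ξ₀ ξ : ℝ} (hξ₀ : 0 < ξ₀) (hlt : ξ₀ < ξ) (c : ℝ≥0∞)
    {a b : ℕ → ℝ≥0∞} (hab : ∀ k, a k ≤ c * (k + 1 : ℕ) * b (k + 1)) :
    ∑' k, ENNReal.ofReal (ξ₀ ^ (k + 1)) * a k ≤
      c * ENNReal.ofReal (ξ₀ / (ξ - ξ₀) ^ 2) * ∑' k, ENNReal.ofReal (ξ ^ (k + 1)) * b k := by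
  set M := ξ₀ / (ξ - ξ₀) ^ 2
  have hM : 0 ≤ M := by positivity
  have hterm : ∀ k, ENNReal.ofReal (ξ₀ ^ (k + 1)) * a k ≤
      c * ENNReal.ofReal M * (ENNReal.ofReal (ξ ^ (k + 1 + 1)) * b (k + 1)) := fun k =>
    calc ENNReal.ofReal (ξ₀ ^ (k + 1)) * a k
        ≤ ENNReal.ofReal (ξ₀ ^ (k + 1)) * (c * (k + 1 : ℕ) * b (k + 1)) := by gcongr; exact hab k
      _ = c * ENNReal.ofReal ((k + 1 : ℕ) * ξ₀ ^ (k + 1)) * b (k + 1) := by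
        rw [ENNReal.ofReal_mul (by positivity), ENNReal.ofReal_natCast]; ring
      _ ≤ c * ENNReal.ofReal (M * ξ ^ (k + 1 + 1)) * b (k + 1) := by
        gcongr c * ENNReal.ofReal ?_ * _
        exact natCast_mul_pow_le hξ₀ hlt (k + 1)
      _ = c * ENNReal.ofReal M * (ENNReal.ofReal (ξ ^ (k + 1 + 1)) * b (k + 1)) := by
        rw [ENNReal.ofReal_mul hM]; ring
  calc ∑' k, ENNReal.ofReal (ξ₀ ^ (k + 1)) * a k
      ≤ c * ENNReal.ofReal M * ∑' k, ENNReal.ofReal (ξ ^ (k + 1 + 1)) * b (k + 1) := by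
        rw [← ENNReal.tsum_mul_left]; exact ENNReal.tsum_le_tsum hterm
    _ ≤ c * ENNReal.ofReal M * ∑' k, ENNReal.ofReal (ξ ^ (k + 1)) * b k := by
        gcongr _ * ?_
        exact tsum_comp_le_tsum_of_injective (add_left_injective 1)
          fun k => ENNReal.ofReal (ξ ^ (k + 1)) * b k

theorem stmt2_general [MeasurableSpace Ω] (p : Measure Ω) [IsProbabilityMeasure p]
    (h : Z3 → Ω → ℝ) (hBer : BernoulliFamily p h)
    (μ : Measure (ℕ → Ω)) (hProd : ProductLaw p μ)
    (α : ℝ) (C₀ : ℝ) (hC₀ : 0 < C₀)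
    (hdet : ∀ (k : ℕ) (j : Fin k) (γ : DM (k + 1)),
      l2H p α (fun ω => Bc h ω j γ) ≤ ENNReal.ofReal C₀ * hnorm α γ) :
    (∀ (k : ℕ) (j : Fin k) (γ : (ℕ → Ω) → DM (k + 1)), IndepOf μ (k + 1) γ →
        l2H μ α (fun w => Bc h (w (k + 1)) j (γ w)) ≤
            ENNReal.ofReal C₀ * l2H μ α γ ∧
        l2H μ α (fun w => Bfull h (w (k + 1)) (γ w)) ≤
            ENNReal.ofReal C₀ * (k : ℝ≥0∞) * l2H μ α γ) ∧
    (∀ ξ ξ₀ : ℝ, 0 < ξ₀ → ξ₀ < ξ → ∃ C : ℝ, 0 < C ∧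
      ∀ Γ : (ℕ → Ω) → Seq,
        (∀ k : ℕ, IndepOf μ (k + 2) (fun w => Γ w (k + 2))) →
        l2seq μ α ξ₀ (fun w => BhatI h w (Γ w)) ≤
          ENNReal.ofReal C * l2seq μ α ξ Γ) := by
  have hcoll : ∀ (k : ℕ) (j : Fin k) (γ : (ℕ → Ω) → DM (k + 1)), IndepOf μ (k + 1) γ →
      l2H μ α (fun w => Bc h (w (k + 1)) j (γ w)) ≤ ENNReal.ofReal C₀ * l2H μ α γ ∧
      l2H μ α (fun w => Bfull h (w (k + 1)) (γ w)) ≤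
        ENNReal.ofReal C₀ * (k : ℝ≥0∞) * l2H μ α γ := fun k j γ hγ =>
    ⟨hProd.l2H_comp_le (F := fun ω => Bc h ω j) hγ ENNReal.ofReal_ne_top (hdet k j),
      hProd.l2H_comp_le (F := fun ω => Bfull h ω) hγ
        (ENNReal.mul_ne_top ENNReal.ofReal_ne_top (ENNReal.natCast_ne_top k))
        fun γ₀ => l2H_Bfull_le p hBer.1 γ₀ fun j => hdet k j γ₀⟩
  refine ⟨hcoll, fun ξ ξ₀ hξ₀ hlt => ⟨C₀ * (ξ₀ / (ξ - ξ₀) ^ 2), ?_, fun Γ hΓ => ?_⟩⟩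
  · have := sub_pos.2 hlt
    positivity
  rw [ENNReal.ofReal_mul hC₀.le]
  exact tsum_pow_mul_le_of_le_succ_mul hξ₀ hlt _
    (a := fun k => l2H μ α fun w => BhatI h w (Γ w) (k + 1))
    (b := fun k => l2H μ α fun w => Γ w (k + 1))
    fun k => (hcoll (k + 1) 0 (fun w => Γ w (k + 2)) (hΓ k)).2

/-- the randomized collision estimate for data independent of the
randomization parameter ω_{k+1} (Proposition 3.4), and its ℋ_ξ^α consequence. -/
theorem stmt2 [MeasurableSpace Ω] (p : Measure Ω) [IsProbabilityMeasure p]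
    (h : Z3 → Ω → ℝ) (hBer : BernoulliFamily p h)
    (μ : Measure (ℕ → Ω)) (hProd : ProductLaw p μ)
    (α : ℝ) (hα : 3 / 4 < α) (C₀ : ℝ) (hC₀ : 0 < C₀)
    (hdet : ∀ (k : ℕ) (j : Fin k) (γ : DM (k + 1)),
      l2H p α (fun ω => Bc h ω j γ) ≤ ENNReal.ofReal C₀ * hnorm α γ) :
    (∀ (k : ℕ) (j : Fin k) (γ : (ℕ → Ω) → DM (k + 1)), IndepOf μ (k + 1) γ →
        l2H μ α (fun w => Bc h (w (k + 1)) j (γ w)) ≤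
            ENNReal.ofReal C₀ * l2H μ α γ ∧
        l2H μ α (fun w => Bfull h (w (k + 1)) (γ w)) ≤
            ENNReal.ofReal C₀ * (k : ℝ≥0∞) * l2H μ α γ) ∧
    (∀ ξ ξ₀ : ℝ, 0 < ξ₀ → ξ₀ < ξ → ∃ C : ℝ, 0 < C ∧
      ∀ Γ : (ℕ → Ω) → Seq,
        (∀ k : ℕ, IndepOf μ (k + 2) (fun w => Γ w (k + 2))) →
        l2seq μ α ξ₀ (fun w => BhatI h w (Γ w)) ≤
          ENNReal.ofReal C * l2seq μ α ξ Γ) :=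
  stmt2_general p h hBer μ hProd α C₀ hC₀ hdet

end GP

end
end

section
/- Fix β₀ > β > 0. There exist constants C = C(β, β₀) > 0 and r = r(β, β₀) > 0, independent of k, such that for every k ∈ ℕ, every density matrix σ₀^{(k)} of order k with ‖σ₀^{(k)}‖_{H^{β₀}(Λ^k×Λ^k)} < ∞, every t ∈ ℝ and every δ > 0: ‖(U^{(k)}(t+δ) − U^{(k)}(t)) σ₀^{(k)}‖_{H^β(Λ^k×Λ^k)} ≤ C δ^r · ‖σ₀^{(k)}‖_{H^{β₀}(Λ^k×Λ^k)}. -/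
/-!
On the Fourier side `U(t + δ) - U(t)` multiplies the coefficient at `(ξ, ξ')` by
`e^{-itλ} (e^{-iδλ} - 1)` with `λ = |ξ|² - |ξ'|²`. Since `|e^{iθ} - 1| ≤ 2 min(1, |θ|) ≤ 2 |θ|^r`
for `0 < r ≤ 1` and `|λ| ≤ W := ∏ⱼ ⟨ξⱼ⟩² ⟨ξ'ⱼ⟩²`, the multiplier is at most `2 δ^r W^r`.
The `H^β` weight is `W^β`, so for `2r ≤ β₀ - β` the factor `W^{2r}` is absorbed into the
`H^{β₀}` weight; this gives `C = 2` and `r = min(1, (β₀ - β)/2)`, uniformly in `k`.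
-/

open MeasureTheory ENNReal

noncomputable section

namespace GP

variable {Ω W : Type}

lemma sum_le_prod_one_add {ι : Type*} (s : Finset ι) {f : ι → ℝ} (hf : ∀ i ∈ s, 0 ≤ f i) :
    ∑ i ∈ s, f i ≤ ∏ i ∈ s, (1 + f i) := by
  classical
  induction s using Finset.induction_on with
  | empty => simp
  | insert c s hc ih =>
    rw [Finset.sum_insert hc, Finset.prod_insert hc]
    have hs : ∀ i ∈ s, 0 ≤ f i := fun i hi => hf i (Finset.mem_insert_of_mem hi)
    have hfc : 0 ≤ f c := hf c (Finset.mem_insert_self c s)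
    have hprod : 1 ≤ ∏ i ∈ s, (1 + f i) :=
      Finset.one_le_prod fun i hi => le_add_of_nonneg_right (hs i hi)
    nlinarith [ih hs]

lemma nsq_nonneg (ζ : Z3) : 0 ≤ nsq ζ :=
  Finset.sum_nonneg fun i _ => sq_nonneg (ζ i)

def bracketSq {k : ℕ} (a : Fin k → Z3) : ℝ := ∏ j, (1 + (nsq (a j) : ℝ))

lemma one_le_bracketSq {k : ℕ} (a : Fin k → Z3) : 1 ≤ bracketSq a :=
  Finset.one_le_prod fun j _ => le_add_of_nonneg_right (by exact_mod_cast nsq_nonneg (a j))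

lemma sum_nsq_le_bracketSq {k : ℕ} (a : Fin k → Z3) : ((∑ j, nsq (a j) : ℤ) : ℝ) ≤ bracketSq a := by
  push_cast
  exact sum_le_prod_one_add _ fun j _ => by exact_mod_cast nsq_nonneg (a j)

lemma jb_rpow_two_mul (ζ : Z3) (α : ℝ) : jb ζ ^ (2 * α) = (1 + (nsq ζ : ℝ)) ^ α := by
  have h : (0 : ℝ) ≤ 1 + nsq ζ := by
    have := nsq_nonneg ζ
    positivity
  rw [jb, Real.rpow_mul (Real.sqrt_nonneg _), Real.rpow_two, Real.sq_sqrt h]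

lemma wt_eq_rpow (α : ℝ) {k : ℕ} (a b : Fin k → Z3) :
    wt α a b = (bracketSq a * bracketSq b) ^ α := by
  have hnn : ∀ c : Fin k → Z3, ∀ j ∈ Finset.univ, (0 : ℝ) ≤ 1 + nsq (c j) := fun c j _ => by
    have := nsq_nonneg (c j)
    positivity
  rw [wt, Real.mul_rpow (zero_le_one.trans (one_le_bracketSq a))
      (zero_le_one.trans (one_le_bracketSq b)), bracketSq, bracketSq,
    ← Real.finsetProd_rpow _ _ (hnn a), ← Real.finsetProd_rpow _ _ (hnn b),
    ← Finset.prod_mul_distrib]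
  simp only [jb_rpow_two_mul]

lemma wt_nonneg (α : ℝ) {k : ℕ} (a b : Fin k → Z3) : 0 ≤ wt α a b := by
  rw [wt_eq_rpow]
  exact Real.rpow_nonneg (mul_nonneg (zero_le_one.trans (one_le_bracketSq a))
    (zero_le_one.trans (one_le_bracketSq b))) α

/-- Both energies are nonnegative, so their difference is bounded by the larger one. -/
lemma abs_energy_sub_le {k : ℕ} (a b : Fin k → Z3) :
    |((((∑ j, nsq (a j)) - ∑ j, nsq (b j) : ℤ)) : ℝ)| ≤ bracketSq a * bracketSq b := by
  have ha := sum_nsq_le_bracketSq a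
  have hb := sum_nsq_le_bracketSq b
  have ha0 : (0 : ℝ) ≤ ((∑ j, nsq (a j) : ℤ) : ℝ) :=
    by exact_mod_cast Finset.sum_nonneg fun j _ => nsq_nonneg (a j)
  have hb0 : (0 : ℝ) ≤ ((∑ j, nsq (b j) : ℤ) : ℝ) :=
    by exact_mod_cast Finset.sum_nonneg fun j _ => nsq_nonneg (b j)
  have hA := one_le_bracketSq a
  have hB := one_le_bracketSq b
  rw [Int.cast_sub, abs_le]
  constructor <;> nlinarith

lemma norm_exp_I_mul_ofReal_sub_one_le_rpow (x : ℝ) {r : ℝ} (hr0 : 0 < r) (hr1 : r ≤ 1) :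
    ‖Complex.exp (Complex.I * x) - 1‖ ≤ 2 * |x| ^ r := by
  rcases le_total |x| 1 with hx | hx
  · calc ‖Complex.exp (Complex.I * x) - 1‖ ≤ |x| := Real.norm_exp_I_mul_ofReal_sub_one_le
      _ ≤ |x| ^ r := Real.self_le_rpow_of_le_one (abs_nonneg x) hx hr1
      _ ≤ 2 * |x| ^ r := by linarith [Real.rpow_nonneg (abs_nonneg x) r]
  · calc ‖Complex.exp (Complex.I * x) - 1‖ ≤ ‖Complex.exp (Complex.I * x)‖ + ‖(1 : ℂ)‖ :=
          norm_sub_le _ _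
      _ = 2 * 1 := by rw [Complex.norm_exp_I_mul_ofReal, norm_one]; norm_num
      _ ≤ 2 * |x| ^ r := by gcongr; exact Real.one_le_rpow hx hr0.le

lemma norm_freeEv_add_sub_freeEv_le {k : ℕ} (σ : DM k) (a b : Fin k → Z3) (t : ℝ) {δ r : ℝ}
    (hδ : 0 ≤ δ) (hr0 : 0 < r) (hr1 : r ≤ 1) :
    ‖(freeEv (t + δ) σ - freeEv t σ) a b‖ ≤
      2 * δ ^ r * (bracketSq a * bracketSq b) ^ r * ‖σ a b‖ := by
  set n : ℤ := (∑ j, nsq (a j)) - ∑ j, nsq (b j) with hn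
  have hfactor : (freeEv (t + δ) σ - freeEv t σ) a b =
      Complex.exp (Complex.I * ((-(t * n) : ℝ) : ℂ)) *
        ((Complex.exp (Complex.I * ((-(δ * n) : ℝ) : ℂ)) - 1) * σ a b) := by
    have hsplit : -(Complex.I * ((t + δ : ℝ) : ℂ) * n) =
        Complex.I * ((-(t * n) : ℝ) : ℂ) + Complex.I * ((-(δ * n) : ℝ) : ℂ) := by
      push_cast; ring
    have ht : -(Complex.I * (t : ℂ) * n) = Complex.I * ((-(t * n) : ℝ) : ℂ) := by
      push_cast; ring
    simp only [Pi.sub_apply, freeEv, ← hn]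
    rw [hsplit, ht, Complex.exp_add]
    ring
  have hphase : |(-(δ * n) : ℝ)| ^ r ≤ δ ^ r * (bracketSq a * bracketSq b) ^ r := by
    rw [abs_neg, abs_mul, abs_of_nonneg hδ, Real.mul_rpow hδ (abs_nonneg _)]
    gcongr
    exact abs_energy_sub_le a b
  rw [hfactor, norm_mul, Complex.norm_exp_I_mul_ofReal, one_mul, norm_mul]
  calc ‖Complex.exp (Complex.I * ((-(δ * n) : ℝ) : ℂ)) - 1‖ * ‖σ a b‖
      ≤ 2 * |(-(δ * n) : ℝ)| ^ r * ‖σ a b‖ := by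
        gcongr
        exact norm_exp_I_mul_ofReal_sub_one_le_rpow _ hr0 hr1
    _ ≤ 2 * δ ^ r * (bracketSq a * bracketSq b) ^ r * ‖σ a b‖ := by
        rw [mul_assoc 2 (δ ^ r)]
        gcongr

lemma hnorm_le_of_forall_le {α α' c : ℝ} {k : ℕ} {γ σ : DM k} (hc : 0 ≤ c)
    (h : ∀ a b, wt α a b * ‖γ a b‖ ^ 2 ≤ c ^ 2 * (wt α' a b * ‖σ a b‖ ^ 2)) :
    hnorm α γ ≤ ENNReal.ofReal c * hnorm α' σ := by
  have hsq_le : hsq α γ ≤ ENNReal.ofReal (c ^ 2) * hsq α' σ := by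
    rw [hsq, hsq, ← ENNReal.tsum_mul_left]
    refine ENNReal.tsum_le_tsum fun q => ?_
    have hnorm_sq : ∀ x : ℂ, (‖x‖₊ : ℝ≥0∞) ^ 2 = ENNReal.ofReal (‖x‖ ^ 2) := fun x => by
      rw [ENNReal.ofReal_pow (norm_nonneg x), ENNReal.ofReal_eq_coe_nnreal (norm_nonneg x)]
      rfl
    rw [hnorm_sq, hnorm_sq, ← ENNReal.ofReal_mul (wt_nonneg _ _ _),
      ← ENNReal.ofReal_mul (wt_nonneg _ _ _), ← ENNReal.ofReal_mul (sq_nonneg c)]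
    exact ENNReal.ofReal_le_ofReal (h q.1 q.2)
  calc hnorm α γ ≤ (ENNReal.ofReal (c ^ 2) * hsq α' σ) ^ (1 / 2 : ℝ) :=
        ENNReal.rpow_le_rpow hsq_le (by norm_num)
    _ = ENNReal.ofReal c * hnorm α' σ := by
        rw [ENNReal.mul_rpow_of_nonneg _ _ (by norm_num),
          ENNReal.ofReal_rpow_of_nonneg (sq_nonneg c) (by norm_num), ← Real.sqrt_eq_rpow,
          Real.sqrt_sq hc, hnorm]

/-- Lemma 3.19: time-difference estimate for the free evolution. -/
theorem stmt10 :
    ∀ β β₀ : ℝ, 0 < β → β < β₀ →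
      ∃ C : ℝ, 0 < C ∧ ∃ r : ℝ, 0 < r ∧
        ∀ (k : ℕ) (σ0 : DM k), hnorm β₀ σ0 ≠ ⊤ →
          ∀ (t δ : ℝ), 0 < δ →
            hnorm β (freeEv (t + δ) σ0 - freeEv t σ0) ≤
              ENNReal.ofReal (C * δ ^ r) * hnorm β₀ σ0 := by
  intro β β₀ _ hββ₀
  set r := min 1 ((β₀ - β) / 2)
  have hr0 : 0 < r := lt_min one_pos (by linarith)
  have hr1 : r ≤ 1 := min_le_left _ _
  have hr2 : β + 2 * r ≤ β₀ := by linarith [min_le_right 1 ((β₀ - β) / 2)]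
  refine ⟨2, two_pos, r, hr0, fun k σ0 _ t δ hδ => ?_⟩
  refine hnorm_le_of_forall_le (by positivity) fun a b => ?_
  set W := bracketSq a * bracketSq b
  have hW : 1 ≤ W := one_le_mul_of_one_le_of_one_le (one_le_bracketSq a) (one_le_bracketSq b)
  have hdiff := norm_freeEv_add_sub_freeEv_le σ0 a b t hδ.le hr0 hr1
  have hweight : W ^ β * (W ^ r) ^ 2 ≤ W ^ β₀ := by
    rw [← Real.rpow_natCast, ← Real.rpow_mul (by linarith), ← Real.rpow_add (by linarith)]
    exact Real.rpow_le_rpow_of_exponent_le hW (by push_cast; linarith)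
  rw [wt_eq_rpow, wt_eq_rpow]
  calc W ^ β * ‖(freeEv (t + δ) σ0 - freeEv t σ0) a b‖ ^ 2
      ≤ W ^ β * (2 * δ ^ r * W ^ r * ‖σ0 a b‖) ^ 2 := by gcongr
    _ = (2 * δ ^ r) ^ 2 * ((W ^ β * (W ^ r) ^ 2) * ‖σ0 a b‖ ^ 2) := by ring
    _ ≤ (2 * δ ^ r) ^ 2 * (W ^ β₀ * ‖σ0 a b‖ ^ 2) := by gcongr

end GP

end
end
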